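/- Let m ∈ ℝ and R > |m|/2, and on E_R = {x ∈ ℝ³ : |x| > R} define U(x) := 1 + m/(2|x|) and h₀(x) := m/(2·U(x)·|x|²) = m/(2|x|² + m|x|). Then for every x ∈ E_R: Δh₀(x) − (m/(U(x)·|x|²))·⟨∇h₀(x), x/|x|⟩ = m/(U(x)·|x|⁴). -/

import Mathlib

noncomputable section

open scoped RealInnerProductSpace

abbrev E3 : Type := EuclideanSpace ℝ (Fin 3)

/-- Hessian of `u` at `x`, viewed as a continuous linear map `v ↦ D²u(x)·v`. -/
noncomputable def hess (u : E3 → ℝ) (x : E3) : E3 →L[ℝ] E3 :=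
  fderiv ℝ (gradient u) x

/-- Laplacian of `u` at `x`: the trace of the Hessian. -/
noncomputable def lap (u : E3 → ℝ) (x : E3) : ℝ :=
  LinearMap.trace ℝ E3 (hess u x : E3 →ₗ[ℝ] E3)

open Filter Topology Module

/-! `h₀ = φ(|x|)` with `φ(r) = m / (2r² + mr)` is radial. The gradient of a radial function is
`(φ'(r)/r) x`, so `⟪∇h₀, x/|x|⟫ = φ'(r)`; differentiating `x ↦ (φ'(r)/r) x` once more gives the
Hessian `(φ'/r) I + ((φ'/r)'/r) x ⊗ x`, of trace `φ'' + (n - 1) φ'/r`. As `U r² = (2r² + mr)/2`,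
the claim becomes an identity between rational functions of `r` and `m`, valid where
`r (2r + m) ≠ 0`, which `|x| > R > |m|/2` guarantees. -/

section Radial

variable {E : Type*} [NormedAddCommGroup E] [InnerProductSpace ℝ E]

theorem hasFDerivAt_norm_of_ne_zero {x : E} (hx : x ≠ 0) :
    HasFDerivAt (‖·‖) (‖x‖⁻¹ • innerSL ℝ x) x := by
  have h := (hasStrictFDerivAt_norm_sq x).hasFDerivAt.sqrt (by positivity)
  simp only [Real.sqrt_sq (norm_nonneg _)] at h
  refine h.congr_fderiv ?_
  ext v
  simp
  field_simp

theorem HasDerivAt.hasGradientAt_comp_norm [CompleteSpace E] {φ : ℝ → ℝ} {φ' : ℝ} {x : E}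
    (hφ : HasDerivAt φ φ' ‖x‖) (hx : x ≠ 0) :
    HasGradientAt (fun y => φ ‖y‖) ((φ' / ‖x‖) • x) x := by
  rw [hasGradientAt_iff_hasFDerivAt]
  refine (hφ.comp_hasFDerivAt x (hasFDerivAt_norm_of_ne_zero hx)).congr_fderiv ?_
  ext v
  simp
  ring

theorem HasDerivAt.hasFDerivAt_smul_comp_norm {ψ : ℝ → ℝ} {ψ' : ℝ} {x : E}
    (hψ : HasDerivAt ψ ψ' ‖x‖) (hx : x ≠ 0) :
    HasFDerivAt (fun y => ψ ‖y‖ • y)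
      (ψ ‖x‖ • ContinuousLinearMap.id ℝ E + ((ψ' / ‖x‖) • innerSL ℝ x).smulRight x) x := by
  refine ((hψ.comp_hasFDerivAt x (hasFDerivAt_norm_of_ne_zero hx)).smul
    (hasFDerivAt_id x)).congr_fderiv ?_
  simp only [Function.comp_apply, id, smul_smul, div_eq_mul_inv]

theorem trace_smul_id_add_smulRight [FiniteDimensional ℝ E] (a : ℝ) (ℓ : StrongDual ℝ E)
    (v : E) :
    LinearMap.trace ℝ E ((a • ContinuousLinearMap.id ℝ E + ℓ.smulRight v : E →L[ℝ] E) :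
      E →ₗ[ℝ] E) = a * finrank ℝ E + ℓ v := by
  simp [LinearMap.trace_smulRight]

theorem trace_fderiv_gradient_comp_norm [FiniteDimensional ℝ E] {φ φ' : ℝ → ℝ} {φ'' : ℝ}
    {x : E} (hx : x ≠ 0) (hφ : ∀ᶠ s in 𝓝 ‖x‖, HasDerivAt φ (φ' s) s)
    (hφ' : HasDerivAt φ' φ'' ‖x‖) :
    LinearMap.trace ℝ E (fderiv ℝ (gradient fun y => φ ‖y‖) x : E →ₗ[ℝ] E) =
      φ'' + (finrank ℝ E - 1) * (φ' ‖x‖ / ‖x‖) := by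
  have hgrad : gradient (fun y => φ ‖y‖) =ᶠ[𝓝 x] fun y => (φ' ‖y‖ / ‖y‖) • y := by
    filter_upwards [(continuous_norm.tendsto x).eventually hφ, eventually_ne_nhds hx]
      with y hy hy0
    exact (hy.hasGradientAt_comp_norm hy0).gradient
  have hψ : HasDerivAt (fun s => φ' s / s) ((φ'' * ‖x‖ - φ' ‖x‖ * 1) / ‖x‖ ^ 2) ‖x‖ :=
    hφ'.div (hasDerivAt_id _) (norm_ne_zero_iff.mpr hx)
  rw [hgrad.fderiv_eq, (hψ.hasFDerivAt_smul_comp_norm hx).fderiv, trace_smul_id_add_smulRight]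
  simp
  field_simp
  ring

end Radial

section Profile

def schwarzschildProfile (m s : ℝ) : ℝ := m / (2 * s ^ 2 + m * s)

theorem hasDerivAt_two_mul_sq_add_mul (m s : ℝ) :
    HasDerivAt (fun s => 2 * s ^ 2 + m * s) (4 * s + m) s :=
  (((hasDerivAt_pow 2 s).const_mul 2).add ((hasDerivAt_id s).const_mul m)).congr_deriv
    (by ring)

theorem two_mul_sq_add_mul_pos {m s : ℝ} (hs : |m| / 2 < s) :
    0 < 2 * s ^ 2 + m * s := by
  have hs₀ : 0 < s := by linarith [abs_nonneg m]
  have hsm : 0 < 2 * s + m := by linarith [neg_abs_le m]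
  nlinarith

variable {m s : ℝ}

theorem hasDerivAt_schwarzschildProfile (hs : 2 * s ^ 2 + m * s ≠ 0) :
    HasDerivAt (schwarzschildProfile m) (-m * (4 * s + m) / (2 * s ^ 2 + m * s) ^ 2) s :=
  ((hasDerivAt_const s m).div (hasDerivAt_two_mul_sq_add_mul m s) hs).congr_deriv (by ring)

theorem hasDerivAt_schwarzschildProfile_deriv (hs : 2 * s ^ 2 + m * s ≠ 0) :
    HasDerivAt (fun s => -m * (4 * s + m) / (2 * s ^ 2 + m * s) ^ 2)
      (2 * m * (12 * s ^ 2 + 6 * m * s + m ^ 2) / (2 * s ^ 2 + m * s) ^ 3) s := by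
  have hnum : HasDerivAt (fun s => -m * (4 * s + m)) (-m * 4) s :=
    ((((hasDerivAt_id s).const_mul 4).add_const m).const_mul (-m)).congr_deriv (by ring)
  refine (hnum.div ((hasDerivAt_two_mul_sq_add_mul m s).pow 2) (pow_ne_zero 2 hs)).congr_deriv ?_
  rw [Pi.pow_apply, div_eq_div_iff (by positivity) (by positivity)]
  ring

end Profile

theorem schwarzschild_ansatz_computation (m R : ℝ) (hR : |m| / 2 < R)
    (U h₀ : E3 → ℝ)
    (hU : ∀ x : E3, U x = 1 + m / (2 * ‖x‖))
    (hh₀ : ∀ x : E3, h₀ x = m / (2 * ‖x‖ ^ 2 + m * ‖x‖)) :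
    ∀ x : E3, R < ‖x‖ →
      lap h₀ x - m / (U x * ‖x‖ ^ 2) * ⟪gradient h₀ x, ‖x‖⁻¹ • x⟫ =
        m / (U x * ‖x‖ ^ 4) := by
  intro x hx
  have hr : 0 < ‖x‖ := by linarith [abs_nonneg m]
  have hrm : 0 < 2 * ‖x‖ + m := by linarith [neg_abs_le m]
  have hx₀ : x ≠ 0 := norm_pos_iff.mp hr
  have hD : 2 * ‖x‖ ^ 2 + m * ‖x‖ ≠ 0 := (two_mul_sq_add_mul_pos (hR.trans hx)).ne'
  have hφ : ∀ᶠ s in 𝓝 ‖x‖, HasDerivAt (schwarzschildProfile m)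
      (-m * (4 * s + m) / (2 * s ^ 2 + m * s) ^ 2) s := by
    filter_upwards [eventually_gt_nhds hx] with s hs
    exact hasDerivAt_schwarzschildProfile (two_mul_sq_add_mul_pos (hR.trans hs)).ne'
  have hh₀_eq : h₀ = fun y => schwarzschildProfile m ‖y‖ := funext hh₀
  rw [lap, hess, hh₀_eq,
    trace_fderiv_gradient_comp_norm hx₀ hφ (hasDerivAt_schwarzschildProfile_deriv hD),
    ((hasDerivAt_schwarzschildProfile hD).hasGradientAt_comp_norm hx₀).gradient,
    finrank_euclideanSpace_fin, hU, real_inner_smul_left, real_inner_smul_right,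
    real_inner_self_eq_norm_sq]
  field_simp
  ring
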